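/- arXiv:1709.01680 — 8 statements merged into one kernel-verified Lean document; each statement's English description precedes it below -/
import Mathlib

section
/- Let X be a first countable Hausdorff space, (x_n) a sequence in X, and φ a lower semicontinuous submeasure on ℕ with φ(ℕ) < ∞. For ℓ ∈ X with decreasing local base (U_k), define u(ℓ) := lim_k ‖{n : x_n ∈ U_k}‖_φ. Then the map u : X → [0,∞] is upper semicontinuous; in particular, for every q > 0 the set {ℓ ∈ X : u(ℓ) ≥ q} is closed. -/
open Filter Topology Set
open scoped ENNReal

/-- An ideal on ℕ: contains all finite sets, closed under subsets and finite
unions, and proper. -/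
def IsIdeal (I : Set (Set ℕ)) : Prop :=
  (∀ A : Set ℕ, A.Finite → A ∈ I) ∧
  (∀ A B : Set ℕ, A ⊆ B → B ∈ I → A ∈ I) ∧
  (∀ A B : Set ℕ, A ∈ I → B ∈ I → A ∪ B ∈ I) ∧
  (Set.univ : Set ℕ) ∉ I

/-- `ℓ` is an `I`-limit point of `x`: some subsequence indexed by a set not in
`I` converges to `ℓ`. -/
def ILimitPoint {X : Type*} [TopologicalSpace X] (I : Set (Set ℕ)) (x : ℕ → X) (ℓ : X) : Prop :=
  ∃ A : Set ℕ, A ∉ I ∧ Tendsto x (atTop ⊓ 𝓟 A) (𝓝 ℓ)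

/-- `ℓ` is an `I`-cluster point of `x`. -/
def IClusterPoint {X : Type*} [TopologicalSpace X] (I : Set (Set ℕ)) (x : ℕ → X) (ℓ : X) : Prop :=
  ∀ U ∈ 𝓝 ℓ, {n | x n ∈ U} ∉ I

/-- A lower semicontinuous submeasure on ℕ. -/
def IsLSCSubmeasure (φ : Set ℕ → ℝ≥0∞) : Prop :=
  φ ∅ = 0 ∧ (∀ A B : Set ℕ, A ⊆ B → φ A ≤ φ B) ∧
  (∀ A B : Set ℕ, φ (A ∪ B) ≤ φ A + φ B) ∧
  (∀ A : Set ℕ, Tendsto (fun n => φ (A ∩ Set.Iio n)) atTop (𝓝 (φ A)))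

/-- `‖A‖_φ = lim_n φ(A \ {0,…,n-1})`, the limit of an antitone sequence,
realized as an infimum. -/
noncomputable def phiNorm (φ : Set ℕ → ℝ≥0∞) (A : Set ℕ) : ℝ≥0∞ :=
  ⨅ n : ℕ, φ (A \ Set.Iio n)

/-- The ideal of sets of asymptotic density zero. -/
def I0 : Set (Set ℕ) :=
  {S : Set ℕ | Tendsto (fun n => (Nat.card ↥(S ∩ Set.Iio n) : ℝ) / n) atTop (𝓝 0)}

/-- `u(ℓ) := lim_k ‖{n : x n ∈ U_k}‖_φ` along a decreasing local base at `ℓ`;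
its value is independent of the base and equals the infimum over all
neighborhoods. -/
noncomputable def uFun {X : Type*} [TopologicalSpace X] (φ : Set ℕ → ℝ≥0∞)
    (x : ℕ → X) (ℓ : X) : ℝ≥0∞ :=
  ⨅ U ∈ 𝓝 ℓ, phiNorm φ {n | x n ∈ U}

/-- Isolated points of a set. -/
def isolatedPts {X : Type*} [TopologicalSpace X] (B : Set X) : Set X :=
  {b ∈ B | ∃ U ∈ 𝓝 b, U ∩ B = {b}}


lemma phiNorm_mono (φ : Set ℕ → ℝ≥0∞) (hφ : IsLSCSubmeasure φ) {A B : Set ℕ}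
    (h : A ⊆ B) : phiNorm φ A ≤ phiNorm φ B :=
  iInf_mono fun n => hφ.2.1 _ _ (Set.diff_subset_diff_left h)

/-- `u` is upper semicontinuous, it is the limit of
`‖{n : x n ∈ U k}‖_φ` along any decreasing local base `(U k)`, and
`{ℓ : u ℓ ≥ q}` is closed for every `q > 0`. -/
theorem stmt4 {X : Type*} [TopologicalSpace X] [FirstCountableTopology X]
    [T2Space X] (x : ℕ → X) (φ : Set ℕ → ℝ≥0∞) (hφ : IsLSCSubmeasure φ)
    (hfin : φ Set.univ < ⊤) :
    UpperSemicontinuous (uFun φ x) ∧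
    (∀ (ℓ : X) (U : ℕ → Set X), (𝓝 ℓ).HasBasis (fun _ => True) U → Antitone U →
      Tendsto (fun k => phiNorm φ {n | x n ∈ U k}) atTop (𝓝 (uFun φ x ℓ))) ∧
    (∀ q : ℝ≥0∞, 0 < q → IsClosed {ℓ : X | q ≤ uFun φ x ℓ}) := by
  have husc : UpperSemicontinuous (uFun φ x) := by
    intro ℓ c hc
    rw [uFun] at hc
    obtain ⟨U, hU⟩ := iInf_lt_iff.mp hc
    obtain ⟨hUn, hUc⟩ := iInf_lt_iff.mp hU
    have hint : interior U ∈ 𝓝 ℓ := interior_mem_nhds.mpr hUn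
    filter_upwards [hint] with ℓ' hℓ'
    calc uFun φ x ℓ' ≤ phiNorm φ {n | x n ∈ interior U} :=
          iInf₂_le _ (isOpen_interior.mem_nhds hℓ')
      _ ≤ phiNorm φ {n | x n ∈ U} :=
          phiNorm_mono φ hφ (Set.preimage_mono interior_subset)
      _ < c := hUc
  refine ⟨husc, ?_, ?_⟩
  · intro ℓ U hB hA
    have heq : uFun φ x ℓ = ⨅ k, phiNorm φ {n | x n ∈ U k} := by
      apply le_antisymm
      · exact le_iInf fun k => iInf₂_le (U k) (hB.mem_of_mem trivial)
      · refine le_iInf₂ fun V hV => ?_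
        obtain ⟨k, -, hk⟩ := hB.mem_iff.mp hV
        exact iInf_le_of_le k (phiNorm_mono φ hφ (fun n hn => hk hn))
    rw [heq]
    exact tendsto_atTop_iInf fun i j hij =>
      phiNorm_mono φ hφ (fun n hn => hA hij hn)
  · intro q _
    have h := upperSemicontinuous_iff_isOpen_preimage.mp husc q
    have : {ℓ : X | q ≤ uFun φ x ℓ} = (uFun φ x ⁻¹' Set.Iio q)ᶜ := by
      ext ℓ; simp [not_lt]
    rw [this]
    exact h.isClosed_compl
end

section
/- Let X be a first countable Hausdorff space, (x_n) a sequence in X, and I_φ an analytic P-ideal given by a lower semicontinuous submeasure φ with φ(ℕ) < ∞. Then the set of I_φ-limit points of (x_n) is an F_σ subset of X. -/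
open Filter Topology Set
open scoped ENNReal

/-!
Write `L δ = limitPointsNormGe φ x δ` for the limits of `x` along index sets of `φ`-norm at least
`δ`, so that the `I_φ`-limit points are `⋃ₖ L (1/(k+1))`. For `ε < δ` we have `closure (L δ) ⊆ L ε`: every
neighbourhood of a point of `closure (L δ)` contains a point of `L δ`, whose index set contains,
by lower semicontinuity of `φ`, arbitrarily late finite blocks of `φ`-mass above `ε` that `x` maps
into the neighbourhood. Gluing such blocks along a shrinking countable neighbourhood base gives an
index set of norm `≥ ε` along which `x` converges to the point. Hence the limit points form the
`F_σ`-set `⋃ₖ closure (L (1/(k+1)))`.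
-/

def limitPointsNormGe {X : Type*} [TopologicalSpace X] (φ : Set ℕ → ℝ≥0∞) (x : ℕ → X)
    (δ : ℝ≥0∞) : Set X :=
  {ℓ | ∃ A : Set ℕ, δ ≤ phiNorm φ A ∧ Tendsto x (atTop ⊓ 𝓟 A) (𝓝 ℓ)}

lemma exists_le_phiNorm_forall_eventually_mem {φ : Set ℕ → ℝ≥0∞} (hmono : Monotone φ)
    {P : ℕ → Set ℕ} (hP : Antitone P) {ε : ℝ≥0∞}
    (hblock : ∀ m N₀, ∃ b, N₀ < b ∧ ∃ S ⊆ P m ∩ Ico N₀ b, ε ≤ φ S) :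
    ∃ A : Set ℕ, ε ≤ phiNorm φ A ∧ ∀ m, ∀ᶠ n in atTop, n ∈ A → n ∈ P m := by
  choose b hb S hSP hε using hblock
  let N : ℕ → ℕ := fun m => Nat.rec 0 (fun m' N' => b m' N') m
  have hN : StrictMono N := strictMono_nat_of_lt_succ fun m => hb m (N m)
  have hblockP : ∀ m, S m (N m) ⊆ P m := fun m => (hSP m (N m)).trans inter_subset_left
  have hblockIco : ∀ m, S m (N m) ⊆ Ico (N m) (N (m + 1)) :=
    fun m => (hSP m (N m)).trans inter_subset_right
  refine ⟨⋃ m, S m (N m), le_iInf fun n => (hε n (N n)).trans (hmono ?_), fun m => ?_⟩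
  · intro k hk
    exact ⟨mem_iUnion.2 ⟨n, hk⟩, not_lt.2 (hN.le_apply.trans (hblockIco n hk).1)⟩
  · filter_upwards [eventually_ge_atTop (N m)] with n hn hnA
    obtain ⟨j, hj⟩ := mem_iUnion.1 hnA
    have hmj : m ≤ j := by
      by_contra! hjm
      have := hN.monotone (show j + 1 ≤ m by omega)
      have := (hblockIco j hj).2
      omega
    exact hP hmj (hblockP j hj)

lemma exists_block_of_mem_closure_limitPointsNormGe {X : Type*} [TopologicalSpace X]
    {x : ℕ → X} {φ : Set ℕ → ℝ≥0∞}
    (hlsc : ∀ A : Set ℕ, Tendsto (fun n => φ (A ∩ Iio n)) atTop (𝓝 (φ A)))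
    {ε δ : ℝ≥0∞} (hεδ : ε < δ) {ℓ : X} (hℓ : ℓ ∈ closure (limitPointsNormGe φ x δ))
    {V : Set X} (hV : V ∈ 𝓝 ℓ) (N₀ : ℕ) :
    ∃ b, N₀ < b ∧ ∃ S ⊆ {n | x n ∈ V} ∩ Ico N₀ b, ε ≤ φ S := by
  obtain ⟨ℓ', hℓ'V, A, hδA, hA⟩ :=
    mem_closure_iff_nhds.1 hℓ (interior V) (interior_mem_nhds.2 hV)
  obtain ⟨n₀, hn₀⟩ := eventually_atTop.1 <|
    eventually_inf_principal.1 (hA (mem_interior_iff_mem_nhds.1 hℓ'V))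
  let C := A \ Iio (max n₀ N₀)
  have hδC : δ ≤ φ C := hδA.trans (iInf_le _ _)
  obtain ⟨j, hj⟩ := ((hlsc C).eventually (eventually_gt_nhds (hεδ.trans_le hδC))).exists
  refine ⟨max (N₀ + 1) j, by omega, C ∩ Iio j, ?_, hj.le⟩
  rintro n ⟨⟨hnA, hnM⟩, hnj⟩
  rw [mem_Iio, not_lt, max_le_iff] at hnM
  exact ⟨hn₀ n hnM.1 hnA, hnM.2, hnj.trans_le (le_max_right _ _)⟩

lemma closure_limitPointsNormGe_subset {X : Type*} [TopologicalSpace X]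
    [FirstCountableTopology X] {x : ℕ → X} {φ : Set ℕ → ℝ≥0∞} (hφ : IsLSCSubmeasure φ)
    {ε δ : ℝ≥0∞} (hεδ : ε < δ) :
    closure (limitPointsNormGe φ x δ) ⊆ limitPointsNormGe φ x ε := by
  intro ℓ hℓ
  obtain ⟨U, hU⟩ := (𝓝 ℓ).exists_antitone_basis
  obtain ⟨A, hεA, hA⟩ := exists_le_phiNorm_forall_eventually_mem
    (fun _ _ h => hφ.2.1 _ _ h) (P := fun m => {n | x n ∈ U m})
    (fun _ _ h _ hn => hU.antitone h hn) fun m =>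
      exists_block_of_mem_closure_limitPointsNormGe hφ.2.2.2 hεδ hℓ (hU.mem m)
  refine ⟨A, hεA, hU.tendsto_right_iff.2 fun m _ => ?_⟩
  exact eventually_inf_principal.2 (hA m)

theorem stmt6_general {X : Type*} [TopologicalSpace X] [FirstCountableTopology X]
    (x : ℕ → X) (φ : Set ℕ → ℝ≥0∞) (hφ : IsLSCSubmeasure φ) :
    ∃ F : ℕ → Set X, (∀ n, IsClosed (F n)) ∧
      {ℓ : X | ILimitPoint {A : Set ℕ | phiNorm φ A = 0} x ℓ} = ⋃ n, F n := by
  refine ⟨fun k => closure (limitPointsNormGe φ x ((k : ℝ≥0∞) + 1)⁻¹),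
    fun _ => isClosed_closure, ?_⟩
  ext ℓ
  simp only [mem_ofPred_eq, mem_iUnion]
  constructor
  · rintro ⟨A, hA, hT⟩
    obtain ⟨k, hk⟩ := ENNReal.exists_inv_nat_lt hA
    exact ⟨k, subset_closure ⟨A, (ENNReal.inv_le_inv.2 le_self_add).trans hk.le, hT⟩⟩
  · rintro ⟨k, hk⟩
    have hlt : ((k : ℝ≥0∞) + 1 + 1)⁻¹ < ((k : ℝ≥0∞) + 1)⁻¹ :=
      ENNReal.inv_lt_inv.2 (ENNReal.lt_add_right (by simp) one_ne_zero)
    obtain ⟨A, hA, hT⟩ := closure_limitPointsNormGe_subset hφ hlt hk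
    exact ⟨A, ((ENNReal.inv_pos.2 (by simp)).trans_le hA).ne', hT⟩

/-- the set of `I_φ`-limit points is an `F_σ`-set. -/
theorem stmt6 {X : Type*} [TopologicalSpace X] [FirstCountableTopology X]
    [T2Space X] (x : ℕ → X) (φ : Set ℕ → ℝ≥0∞) (hφ : IsLSCSubmeasure φ)
    (hfin : φ Set.univ < ⊤) :
    ∃ F : ℕ → Set X, (∀ n, IsClosed (F n)) ∧
      {ℓ : X | ILimitPoint {A : Set ℕ | phiNorm φ A = 0} x ℓ} = ⋃ n, F n :=
  stmt6_general x φ hφ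
end

section
/- Let X be a first countable Hausdorff space, (x_n) a sequence in X, and I an F_σ-ideal on ℕ given by a lower semicontinuous submeasure φ via I = {A ⊆ ℕ : φ(A) < ∞} with φ(ℕ) = ∞. Then the set of I-limit points of (x_n) equals the set of I-cluster points of (x_n). In particular, the set of I-limit points is closed. -/
open Filter Topology Set
open scoped ENNReal

private lemma tail_top {φ : Set ℕ → ℝ≥0∞} (hφ : IsLSCSubmeasure φ)
    (hFin : ∀ A : Set ℕ, A.Finite → φ A < ⊤) {S : Set ℕ} (hS : φ S = ⊤) (m : ℕ) :
    φ (S \ Set.Iio m) = ⊤ := by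
  by_contra h
  have h1 : φ (S ∩ Set.Iio m) < ⊤ :=
    hFin _ ((Set.finite_Iio m).subset Set.inter_subset_right)
  have h2 : φ S ≤ φ (S ∩ Set.Iio m) + φ (S \ Set.Iio m) := by
    have := hφ.2.2.1 (S ∩ Set.Iio m) (S \ Set.Iio m)
    rwa [Set.inter_union_diff] at this
  rw [hS] at h2
  exact absurd (le_antisymm le_top h2)
    (ENNReal.add_lt_top.mpr ⟨h1, lt_top_iff_ne_top.mpr h⟩).ne

/-- for an `F_σ`-ideal `I = {A : φ(A) < ∞}`, the `I`-limit points
coincide with the `I`-cluster points; in particular, they form a closed set. -/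
theorem stmt7 {X : Type*} [TopologicalSpace X] [FirstCountableTopology X]
    [T2Space X] (x : ℕ → X) (φ : Set ℕ → ℝ≥0∞) (hφ : IsLSCSubmeasure φ)
    (htop : φ Set.univ = ⊤) (hFin : ∀ A : Set ℕ, A.Finite → φ A < ⊤) :
    {ℓ : X | ILimitPoint {A : Set ℕ | φ A < ⊤} x ℓ}
      = {ℓ : X | IClusterPoint {A : Set ℕ | φ A < ⊤} x ℓ} ∧
    IsClosed {ℓ : X | ILimitPoint {A : Set ℕ | φ A < ⊤} x ℓ} := by
  have hmono := hφ.2.1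
  -- cluster points → limit points and vice versa
  have hCL : ∀ ℓ : X, IClusterPoint {A : Set ℕ | φ A < ⊤} x ℓ →
      ILimitPoint {A : Set ℕ | φ A < ⊤} x ℓ := by
    intro ℓ hc
    obtain ⟨u, hu⟩ := (𝓝 ℓ).exists_antitone_basis
    set S : ℕ → Set ℕ := fun k => {n | x n ∈ u k} with hSdef
    have hStop : ∀ k, φ (S k) = ⊤ := by
      intro k
      have := hc (u k) (hu.mem k)
      simpa [Set.mem_setOf_eq, not_lt, top_le_iff] using this
    have key : ∀ k m : ℕ, ∃ N : ℕ, m < N ∧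
        (k : ℝ≥0∞) ≤ φ ((S k \ Set.Iio m) ∩ Set.Iio N) := by
      intro k m
      have htail : φ (S k \ Set.Iio m) = ⊤ := tail_top hφ hFin (hStop k) m
      have hlsc := hφ.2.2.2 (S k \ Set.Iio m)
      rw [htail] at hlsc
      have hev : ∀ᶠ N in atTop, (k : ℝ≥0∞) ≤ φ ((S k \ Set.Iio m) ∩ Set.Iio N) := by
        have : Set.Ici (k : ℝ≥0∞) ∈ 𝓝 (⊤ : ℝ≥0∞) :=
          Ici_mem_nhds (by exact ENNReal.natCast_lt_top k)
        filter_upwards [hlsc this] with N hN using hN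
      obtain ⟨N, hN1, hN2⟩ := (hev.and (eventually_gt_atTop m)).exists
      exact ⟨N, hN2, hN1⟩
    choose f hf1 hf2 using key
    let n : ℕ → ℕ := fun k => Nat.rec 0 (fun j ih => f j ih) k
    have hn0 : n 0 = 0 := rfl
    have hnsucc : ∀ k, n (k + 1) = f k (n k) := fun k => rfl
    have hnmono : StrictMono n := strictMono_nat_of_lt_succ (fun k => by
      rw [hnsucc]; exact hf1 k (n k))
    set F : ℕ → Set ℕ := fun k => (S k \ Set.Iio (n k)) ∩ Set.Iio (n (k + 1)) with hFdef
    set A : Set ℕ := ⋃ k, F k with hAdef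
    have hFk : ∀ k : ℕ, (k : ℝ≥0∞) ≤ φ (F k) := by
      intro k; rw [hFdef]; simpa [hnsucc] using hf2 k (n k)
    have hAtop : φ A = ⊤ := by
      by_contra h
      obtain ⟨k, hk⟩ := ENNReal.exists_nat_gt h
      exact absurd ((hFk k).trans (hmono _ _ (Set.subset_iUnion F k))) (not_le.mpr hk)
    refine ⟨A, by simp [Set.mem_setOf_eq, hAtop], ?_⟩
    rw [hu.toHasBasis.tendsto_right_iff]
    intro k _
    rw [eventually_inf_principal]
    filter_upwards [eventually_ge_atTop (n k)] with m hm hmA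
    obtain ⟨j, hj⟩ := Set.mem_iUnion.mp hmA
    obtain ⟨⟨hjS, hj1⟩, hj2⟩ := hj
    have hkj : k ≤ j := by
      have : n k < n (j + 1) := lt_of_le_of_lt hm hj2
      exact Nat.lt_succ_iff.mp (hnmono.lt_iff_lt.mp this)
    exact hu.antitone hkj hjS
  have hLC : ∀ ℓ : X, ILimitPoint {A : Set ℕ | φ A < ⊤} x ℓ →
      IClusterPoint {A : Set ℕ | φ A < ⊤} x ℓ := by
    rintro ℓ ⟨A, hA, hten⟩ U hU
    have hAtop : φ A = ⊤ := top_le_iff.mp (not_lt.mp hA)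
    have hev : ∀ᶠ m in atTop, m ∈ A → x m ∈ U := by
      rw [← eventually_inf_principal]; exact hten hU
    obtain ⟨N, hN⟩ := eventually_atTop.mp hev
    have hsub : A \ Set.Iio N ⊆ {m | x m ∈ U} := by
      rintro m ⟨hmA, hmN⟩
      exact hN m (not_lt.mp hmN) hmA
    have := (tail_top hφ hFin hAtop N ▸ hmono _ _ hsub : (⊤:ℝ≥0∞) ≤ φ {m | x m ∈ U})
    simp [Set.mem_setOf_eq, top_le_iff.mp this]
  have heq : {ℓ : X | ILimitPoint {A : Set ℕ | φ A < ⊤} x ℓ}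
      = {ℓ : X | IClusterPoint {A : Set ℕ | φ A < ⊤} x ℓ} :=
    Set.ext fun ℓ => ⟨hLC ℓ, hCL ℓ⟩
  refine ⟨heq, ?_⟩
  rw [heq]
  refine isClosed_of_closure_subset ?_
  intro ℓ hℓ U hU
  obtain ⟨O, hOU, hOopen, hℓO⟩ := mem_nhds_iff.mp hU
  obtain ⟨ℓ', hℓ'O, hℓ'⟩ := mem_closure_iff.mp hℓ O hOopen hℓO
  have := hℓ' O (hOopen.mem_nhds hℓ'O)
  have hsub : {m | x m ∈ O} ⊆ {m | x m ∈ U} := fun m hm => hOU hm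
  simp only [Set.mem_setOf_eq, not_lt, top_le_iff] at this ⊢
  exact top_le_iff.mp (this ▸ hmono _ _ hsub)
end

section
/- Let x be a real sequence and I a summable ideal, i.e., I = {A ⊆ ℕ : Σ_{n∈A} f(n) < ∞} for some f : ℕ → [0,∞) with Σ_n f(n) = ∞. Then the set of I-limit points of x is closed. -/
open Filter Topology Set
open scoped ENNReal

lemma myFinIndSummable (f : ℕ → ℝ) (s : Set ℕ) (hs : s.Finite) :
    Summable (s.indicator f) := by
  apply summable_of_ne_finset_zero (s := hs.toFinset)
  intro n hn
  exact Set.indicator_of_notMem (fun h => hn (hs.mem_toFinset.mpr h)) f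

lemma myExistsBlock (f : ℕ → ℝ) (hf : ∀ n, 0 ≤ f n) (S : Set ℕ)
    (hS : ¬ Summable fun n : S => f n) (m : ℕ) :
    ∃ F : Finset ℕ, (∀ n ∈ F, n ∈ S ∧ m ≤ n) ∧ 1 ≤ ∑ n ∈ F, f n := by
  classical
  set T := S ∩ Set.Ici m with hT
  have hTsum : ¬ Summable (T.indicator f) := by
    intro h
    apply hS
    rw [show (fun n : S => f n) = (f ∘ ((↑) : S → ℕ)) from rfl,
      summable_subtype_iff_indicator]
    have heq : S.indicator f = fun n => T.indicator f n + (S ∩ Set.Iio m).indicator f n := by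
      funext n
      by_cases hn : n ∈ S
      · by_cases hm : m ≤ n
        · simp [Set.indicator, hT, hn, hm, not_lt.mpr hm]
        · simp [Set.indicator, hT, hn, hm, lt_of_not_ge hm]
      · simp [Set.indicator, hT, hn]
    rw [heq]
    exact h.add (myFinIndSummable f _ ((Set.finite_Iio m).inter_of_right S))
  have hpos : ∀ n, 0 ≤ T.indicator f n := fun n => Set.indicator_nonneg (fun i _ => hf i) n
  rw [not_summable_iff_tendsto_nat_atTop_of_nonneg hpos] at hTsum
  obtain ⟨K, hK⟩ := (hTsum.eventually_ge_atTop 1).exists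
  refine ⟨(Finset.range K).filter (fun n => n ∈ T), ?_, ?_⟩
  · intro n hn
    rw [Finset.mem_filter] at hn
    exact hn.2
  · calc (1:ℝ) ≤ ∑ i ∈ Finset.range K, T.indicator f i := hK
      _ = ∑ n ∈ (Finset.range K).filter (fun n => n ∈ T), f n := by
          rw [Finset.sum_filter]
          exact Finset.sum_congr rfl (fun n _ => by simp [Set.indicator])

/-- for a summable ideal, the set of `I`-limit points of a real
sequence is closed. -/
theorem stmt8 (f : ℕ → ℝ) (hf : ∀ n, 0 ≤ f n) (hdiv : ¬ Summable f) (x : ℕ → ℝ) :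
    IsClosed {ℓ : ℝ | ILimitPoint {A : Set ℕ | Summable fun n : ↥A => f n} x ℓ} := by
  classical
  apply isClosed_of_closure_subset
  intro ℓ hℓ
  -- extract approximating limit points with all data
  have H : ∀ k : ℕ, ∃ (l : ℝ) (A : Set ℕ),
      (¬ Summable fun n : A => f n) ∧ dist l ℓ < 1/(k+1) ∧
      ∃ N : ℕ, ∀ n, N ≤ n → n ∈ A → dist (x n) l < 1/(k+1) := by
    intro k
    have hk : (0:ℝ) < 1/(k+1) := by positivity
    obtain ⟨l, hl, hld⟩ := Metric.mem_closure_iff.mp hℓ _ hk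
    obtain ⟨A, hA, htend⟩ := hl
    refine ⟨l, A, hA, by rwa [dist_comm], ?_⟩
    have := Metric.tendsto_nhds.mp htend _ hk
    rw [eventually_inf_principal, eventually_atTop] at this
    obtain ⟨N, hN⟩ := this
    exact ⟨N, hN⟩
  choose ls A hA hdist N hN using H
  -- the recursive construction
  let blk : ℕ → ℕ → Finset ℕ := fun k m => (myExistsBlock f hf (A k) (hA k) m).choose
  have hblk : ∀ k m, (∀ n ∈ blk k m, n ∈ A k ∧ m ≤ n) ∧ 1 ≤ ∑ n ∈ blk k m, f n :=
    fun k m => (myExistsBlock f hf (A k) (hA k) m).choose_spec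
  let m : ℕ → ℕ := fun k => Nat.rec 0 (fun j mj => (blk j (max (N j) mj)).sup id + 1) k
  let F : ℕ → Finset ℕ := fun k => blk k (max (N k) (m k))
  have hmsucc : ∀ k, m (k+1) = (F k).sup id + 1 := fun k => rfl
  have hFmem : ∀ k, ∀ n ∈ F k, n ∈ A k ∧ N k ≤ n ∧ m k ≤ n := by
    intro k n hn
    obtain ⟨h1, h2⟩ := (hblk k (max (N k) (m k))).1 n hn
    exact ⟨h1, le_trans (le_max_left _ _) h2, le_trans (le_max_right _ _) h2⟩
  have hFsum : ∀ k, 1 ≤ ∑ n ∈ F k, f n := fun k => (hblk k _).2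
  have hFlt : ∀ k, ∀ n ∈ F k, n < m (k+1) := by
    intro k n hn
    rw [hmsucc k]
    exact Nat.lt_succ_of_le (Finset.le_sup (f := id) hn)
  have hmono : Monotone m := by
    apply monotone_nat_of_le_succ
    intro k
    have hne : (F k).Nonempty := by
      by_contra hne
      rw [Finset.not_nonempty_iff_eq_empty] at hne
      have := hFsum k
      rw [hne, Finset.sum_empty] at this
      norm_num at this
    obtain ⟨n, hn⟩ := hne
    exact le_trans (hFmem k n hn).2.2 (le_of_lt (hFlt k n hn))
  set B : Set ℕ := ⋃ k, (F k : Set ℕ) with hB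
  -- upper index: any element of B beyond m k lies in F j with j ≥ k
  have hidx : ∀ k n, m k ≤ n → n ∈ B → ∃ j, k ≤ j ∧ n ∈ F j := by
    intro k n hkn hnB
    rw [hB, Set.mem_iUnion] at hnB
    obtain ⟨j, hj⟩ := hnB
    rw [Finset.mem_coe] at hj
    refine ⟨j, ?_, hj⟩
    by_contra hjk
    push_neg at hjk
    have h1 : n < m (j+1) := hFlt j n hj
    have h2 : m (j+1) ≤ m k := hmono hjk
    omega
  -- disjointness
  have hdisj : ∀ i j, i < j → Disjoint (F i) (F j) := by
    intro i j hij
    rw [Finset.disjoint_left]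
    intro n hni hnj
    have h1 : n < m (i+1) := hFlt i n hni
    have h2 : m (i+1) ≤ m j := hmono hij
    have h3 : m j ≤ n := (hFmem j n hnj).2.2
    omega
  refine ⟨B, ?_, ?_⟩
  · -- not summable
    intro hs
    have hs' : Summable (B.indicator f) := by
      rw [← summable_subtype_iff_indicator]
      exact hs
    have key : ∀ K : ℕ, (K : ℝ) ≤ ∑' n, B.indicator f n := by
      intro K
      have hsub : ∀ n ∈ (Finset.range K).biUnion F, n ∈ B := by
        intro n hn
        rw [Finset.mem_biUnion] at hn
        obtain ⟨j, _, hj⟩ := hn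
        exact Set.mem_iUnion.mpr ⟨j, hj⟩
      calc (K:ℝ) = ∑ j ∈ Finset.range K, (1:ℝ) := by simp
        _ ≤ ∑ j ∈ Finset.range K, ∑ n ∈ F j, f n :=
            Finset.sum_le_sum (fun j _ => hFsum j)
        _ = ∑ n ∈ (Finset.range K).biUnion F, f n := by
            rw [Finset.sum_biUnion]
            intro i hi j hj hij
            rcases lt_or_gt_of_ne hij with h | h
            · exact hdisj i j h
            · exact (hdisj j i h).symm
        _ = ∑ n ∈ (Finset.range K).biUnion F, B.indicator f n :=
            Finset.sum_congr rfl (fun n hn => (Set.indicator_of_mem (hsub n hn) f).symm)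
        _ ≤ ∑' n, B.indicator f n :=
            Summable.sum_le_tsum _ (fun n _ => Set.indicator_nonneg (fun i _ => hf i) n) hs'
    obtain ⟨K, hK⟩ := exists_nat_gt (∑' n, B.indicator f n)
    exact absurd (key K) (not_le.mpr hK)
  · -- tendsto
    rw [Metric.tendsto_nhds]
    intro ε hε
    obtain ⟨k, hk⟩ := exists_nat_one_div_lt (show (0:ℝ) < ε/2 by positivity)
    rw [eventually_inf_principal, eventually_atTop]
    refine ⟨m k, fun n hn hnB => ?_⟩
    obtain ⟨j, hkj, hnF⟩ := hidx k n hn hnB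
    obtain ⟨hnA, hnN, _⟩ := hFmem j n hnF
    have h1 : dist (x n) (ls j) < 1/(j+1) := hN j n hnN hnA
    have h2 : dist (ls j) ℓ < 1/(j+1) := hdist j
    have h3 : (1:ℝ)/(j+1) ≤ 1/(k+1) := by
      apply one_div_le_one_div_of_le
      · positivity
      · exact_mod_cast Nat.succ_le_succ hkj
    calc dist (x n) ℓ ≤ dist (x n) (ls j) + dist (ls j) ℓ := dist_triangle _ _ _
      _ < 1/(j+1) + 1/(j+1) := add_lt_add h1 h2
      _ ≤ 1/(k+1) + 1/(k+1) := add_le_add h3 h3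
      _ < ε/2 + ε/2 := add_lt_add hk hk
      _ = ε := add_halves ε
end

section
/- Let φ be a lower semicontinuous submeasure on ℕ with φ(ℕ) < ∞ such that the ideal I_φ = {A : ‖A‖_φ = 0} is not F_σ. Then there exists a partition {A_n : n ∈ ℕ} of ℕ such that ‖A_n‖_φ > 0 for all n and lim_n ‖⋃_{k>n} A_k‖_φ = 0. -/
/-!
Using Solecki's sets, choose `M₀, M₁, …` with `0 < ‖Mₖ‖ ≤ φ(Mₖ)` and `2 φ(Mₖ₊₁) < ‖Mₖ‖`. The values
`φ(Mₖ)` then decay at least geometrically, so by countable subadditivity (a consequence of lower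
semicontinuity) `φ(⋃_{k>n} Mₖ) ≤ 2 φ(Mₙ₊₁) < ‖Mₙ‖`, and these tails tend to `0`. Removing from each
`Mₙ` the later sets therefore keeps `‖·‖_φ` positive, and the resulting disjoint pieces, with the
uncovered rest added to the first one, form the required partition.
-/

open Filter Topology Set
open scoped ENNReal

namespace ENNReal

theorem le_inv_two_pow_mul_of_two_mul_succ_le {b : ℕ → ℝ≥0∞} (hb : ∀ k, 2 * b (k + 1) ≤ b k)
    (n j : ℕ) : b (j + n) ≤ 2⁻¹ ^ j * b n := by
  induction j with
  | zero => simp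
  | succ j ih =>
    calc b (j + 1 + n) = 2⁻¹ * (2 * b (j + n + 1)) := by
          rw [← mul_assoc, ENNReal.inv_mul_cancel two_ne_zero ofNat_ne_top, one_mul,
            Nat.add_right_comm]
      _ ≤ 2⁻¹ * (2⁻¹ ^ j * b n) := by gcongr 2⁻¹ * ?_; exact (hb _).trans ih
      _ = 2⁻¹ ^ (j + 1) * b n := by rw [pow_succ', mul_assoc]

theorem tsum_add_le_two_mul_of_two_mul_succ_le {b : ℕ → ℝ≥0∞}
    (hb : ∀ k, 2 * b (k + 1) ≤ b k) (n : ℕ) : ∑' j, b (j + n) ≤ 2 * b n :=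
  calc ∑' j, b (j + n) ≤ ∑' j, 2⁻¹ ^ j * b n :=
        ENNReal.tsum_le_tsum (le_inv_two_pow_mul_of_two_mul_succ_le hb n)
    _ = 2 * b n := by rw [ENNReal.tsum_mul_right, tsum_geometric, one_sub_inv_two, inv_inv]

end ENNReal

theorem exists_partition_of_pairwise_disjoint {α : Type*} {B : ℕ → Set α}
    (hB : Pairwise (Function.onFun Disjoint B)) :
    ∃ A : ℕ → Set α, Pairwise (Function.onFun Disjoint A) ∧ (⋃ n, A n) = univ ∧
      (∀ n, B n ⊆ A n) ∧ ∀ n, 0 < n → A n = B n := by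
  classical
  set C := ⋃ k, B (k + 1)
  have hB0C : Disjoint (B 0) C := disjoint_iUnion_right.2 fun k => hB (by omega)
  refine ⟨fun n => if n = 0 then Cᶜ else B n, ?_, ?_, ?_, fun n hn => if_neg hn.ne'⟩
  · have hC : ∀ n, 0 < n → B n ⊆ C := fun n hn =>
      subset_iUnion_of_subset (n - 1) (by rw [Nat.sub_add_cancel hn])
    intro m n hmn
    simp only [Function.onFun]
    rcases Nat.eq_zero_or_pos m with rfl | hm <;> rcases Nat.eq_zero_or_pos n with rfl | hn
    · exact absurd rfl hmn
    · simpa [hn.ne'] using (disjoint_compl_left.mono_right (hC n hn))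
    · simpa [hm.ne'] using (disjoint_compl_left.mono_right (hC m hm)).symm
    · simpa [hm.ne', hn.ne'] using hB hmn
  · refine eq_univ_of_forall fun x => ?_
    by_cases hx : x ∈ C
    · obtain ⟨k, hk⟩ := mem_iUnion.1 hx
      exact mem_iUnion.2 ⟨k + 1, by simpa using hk⟩
    · exact mem_iUnion.2 ⟨0, by simpa using hx⟩
  · intro n
    rcases Nat.eq_zero_or_pos n with rfl | hn
    · simpa using hB0C.subset_compl_right
    · simp [hn.ne']

theorem phiNorm_le_apply (φ : Set ℕ → ℝ≥0∞) (A : Set ℕ) : phiNorm φ A ≤ φ A :=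
  (iInf_le _ 0).trans_eq (by simp)

namespace IsLSCSubmeasure

variable {φ : Set ℕ → ℝ≥0∞}

theorem apply_biUnion_finset_le (hφ : IsLSCSubmeasure φ) (f : ℕ → Set ℕ) (s : Finset ℕ) :
    φ (⋃ i ∈ s, f i) ≤ ∑ i ∈ s, φ (f i) := by
  classical
  induction s using Finset.induction with
  | empty => simp [hφ.1]
  | insert a s _ ih =>
    rw [Finset.sum_insert ‹_›, Finset.set_biUnion_insert]
    exact (hφ.2.2.1 _ _).trans (by gcongr)

theorem apply_iUnion_le_tsum (hφ : IsLSCSubmeasure φ) (f : ℕ → Set ℕ) :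
    φ (⋃ i, f i) ≤ ∑' i, φ (f i) := by
  refine le_of_tendsto' (hφ.2.2.2 _) fun m => ?_
  obtain ⟨I, hI, hsub⟩ := Set.finite_subset_iUnion (Set.finite_Iio m |>.inter_of_right _)
    (inter_subset_left : (⋃ i, f i) ∩ Iio m ⊆ ⋃ i, f i)
  calc φ ((⋃ i, f i) ∩ Iio m) ≤ φ (⋃ i ∈ hI.toFinset, f i) := hφ.2.1 _ _ (by simpa using hsub)
    _ ≤ ∑ i ∈ hI.toFinset, φ (f i) := hφ.apply_biUnion_finset_le f _
    _ ≤ ∑' i, φ (f i) := ENNReal.sum_le_tsum _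

theorem apply_biUnion_gt_le_tsum (hφ : IsLSCSubmeasure φ) (f : ℕ → Set ℕ) (n : ℕ) :
    φ (⋃ k > n, f k) ≤ ∑' j, φ (f (j + (n + 1))) := by
  refine (hφ.2.1 _ _ ?_).trans (hφ.apply_iUnion_le_tsum _)
  simp only [iUnion_subset_iff]
  intro k hk
  exact subset_iUnion_of_subset (k - (n + 1)) (by rw [Nat.sub_add_cancel hk])

theorem phiNorm_mono (hφ : IsLSCSubmeasure φ) {A B : Set ℕ} (h : A ⊆ B) :
    phiNorm φ A ≤ phiNorm φ B :=
  iInf_mono fun _ => hφ.2.1 _ _ (sdiff_subset_sdiff_left h)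

theorem phiNorm_union_le (hφ : IsLSCSubmeasure φ) (A B : Set ℕ) :
    phiNorm φ (A ∪ B) ≤ phiNorm φ A + φ B := by
  rw [phiNorm, phiNorm, ENNReal.iInf_add]
  refine iInf_mono fun n => (hφ.2.1 _ _ ?_).trans (hφ.2.2.1 _ _)
  exact union_sdiff_distrib.subset.trans (union_subset_union_right _ sdiff_subset)

theorem phiNorm_diff_pos (hφ : IsLSCSubmeasure φ) {A B : Set ℕ} (h : φ B < phiNorm φ A) :
    0 < phiNorm φ (A \ B) := by
  refine pos_iff_ne_zero.2 fun h0 => h.not_ge ?_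
  calc phiNorm φ A ≤ phiNorm φ (A \ B ∪ B) := hφ.phiNorm_mono (by simp)
    _ ≤ φ B := by simpa [h0] using hφ.phiNorm_union_le (A \ B) B

end IsLSCSubmeasure

section Partition

variable {φ : Set ℕ → ℝ≥0∞}

theorem exists_seq_two_mul_apply_succ_lt_phiNorm
    (h : ∀ ε : ℝ≥0∞, 0 < ε → ∃ M : Set ℕ, 0 < phiNorm φ M ∧ phiNorm φ M ≤ φ M ∧ φ M < ε) :
    ∃ M : ℕ → Set ℕ, φ (M 0) ≠ ∞ ∧
      ∀ k, phiNorm φ (M k) ≤ φ (M k) ∧ 2 * φ (M (k + 1)) < phiNorm φ (M k) := by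
  let S := {M : Set ℕ // 0 < phiNorm φ M ∧ phiNorm φ M ≤ φ M}
  have hstep : ∀ s : S, ∃ t : S, 2 * φ t < phiNorm φ s := fun s => by
    obtain ⟨M, hpos, hle, hlt⟩ := h _ (ENNReal.half_pos s.2.1.ne')
    refine ⟨⟨M, hpos, hle⟩, ?_⟩
    rwa [mul_comm, ← ENNReal.lt_div_iff_mul_lt (by simp) (by simp)]
  choose next hnext using hstep
  obtain ⟨M₀, hpos, hle, hlt⟩ := h 1 one_pos
  refine ⟨fun k => (next^[k] ⟨M₀, hpos, hle⟩).1, hlt.ne_top, fun k => ⟨(next^[k] _).2.2, ?_⟩⟩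
  simpa only [Function.iterate_succ_apply'] using hnext _

theorem exists_partition_phiNorm_pos_of_apply_biUnion_gt_lt (hφ : IsLSCSubmeasure φ)
    (M : ℕ → Set ℕ) (hlt : ∀ n, φ (⋃ k > n, M k) < phiNorm φ (M n))
    (hlim : Tendsto (fun n => φ (⋃ k > n, M k)) atTop (𝓝 0)) :
    ∃ A : ℕ → Set ℕ, Pairwise (Function.onFun Disjoint A) ∧ (⋃ n, A n) = univ ∧
      (∀ n, 0 < phiNorm φ (A n)) ∧
      Tendsto (fun n => phiNorm φ (⋃ k > n, A k)) atTop (𝓝 0) := by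
  set B := fun n => M n \ ⋃ k > n, M k
  have hB : Pairwise (Function.onFun Disjoint B) := by
    refine (pairwise_disjoint_on B).2 fun m n hmn => ?_
    exact disjoint_sdiff_left.mono_right (sdiff_subset.trans (subset_biUnion_of_mem hmn))
  obtain ⟨A, hdisj, hcover, hBA, hAB⟩ := exists_partition_of_pairwise_disjoint hB
  refine ⟨A, hdisj, hcover,
    fun n => (hφ.phiNorm_diff_pos (hlt n)).trans_le (hφ.phiNorm_mono (hBA n)), ?_⟩
  refine tendsto_of_tendsto_of_tendsto_of_le_of_le tendsto_const_nhds hlim (fun _ => zero_le)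
    fun n => ?_
  calc phiNorm φ (⋃ k > n, A k) ≤ φ (⋃ k > n, A k) := phiNorm_le_apply φ _
    _ ≤ φ (⋃ k > n, M k) := hφ.2.1 _ _ <| biUnion_mono subset_rfl fun k hk => by
        rw [hAB k (Nat.zero_lt_of_lt hk)]
        exact sdiff_subset

end Partition

theorem stmt9_general (φ : Set ℕ → ℝ≥0∞) (hφ : IsLSCSubmeasure φ)
    (hnotFσ : ∀ ε : ℝ≥0∞, 0 < ε →
      ∃ M : Set ℕ, 0 < phiNorm φ M ∧ phiNorm φ M ≤ φ M ∧ φ M < ε) :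
    ∃ A : ℕ → Set ℕ, Pairwise (Function.onFun Disjoint A) ∧ (⋃ n, A n) = Set.univ ∧
      (∀ n, 0 < phiNorm φ (A n)) ∧
      Tendsto (fun n => phiNorm φ (⋃ k > n, A k)) atTop (𝓝 0) := by
  obtain ⟨M, hM₀, hM⟩ := exists_seq_two_mul_apply_succ_lt_phiNorm hnotFσ
  have hgeom : ∀ n, ∑' j, φ (M (j + n)) ≤ 2 * φ (M n) :=
    ENNReal.tsum_add_le_two_mul_of_two_mul_succ_le fun k => (hM k).2.le.trans (hM k).1
  have hsum : ∑' j, φ (M j) ≠ ∞ :=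
    ne_top_of_le_ne_top (ENNReal.mul_ne_top ENNReal.ofNat_ne_top hM₀) (by simpa using hgeom 0)
  refine exists_partition_phiNorm_pos_of_apply_biUnion_gt_lt hφ M (fun n => ?_) ?_
  · calc φ (⋃ k > n, M k) ≤ ∑' j, φ (M (j + (n + 1))) := hφ.apply_biUnion_gt_le_tsum M n
      _ ≤ 2 * φ (M (n + 1)) := hgeom _
      _ < phiNorm φ (M n) := (hM n).2
  · exact tendsto_of_tendsto_of_tendsto_of_le_of_le tendsto_const_nhds
      ((ENNReal.tendsto_sum_nat_add _ hsum).comp (tendsto_add_atTop_nat 1)) (fun _ => zero_le)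
      (hφ.apply_biUnion_gt_le_tsum M)

/-- if `I_φ` is not `F_σ` (via Solecki's characterization), there
is a partition `{A n}` of ℕ with `‖A n‖_φ > 0` and `‖⋃_{k>n} A k‖_φ → 0`. -/
theorem stmt9 (φ : Set ℕ → ℝ≥0∞) (hφ : IsLSCSubmeasure φ) (hfin : φ Set.univ < ⊤)
    (hnotFσ : ∀ ε : ℝ≥0∞, 0 < ε →
      ∃ M : Set ℕ, 0 < phiNorm φ M ∧ phiNorm φ M ≤ φ M ∧ φ M < ε) :
    ∃ A : ℕ → Set ℕ, Pairwise (Function.onFun Disjoint A) ∧ (⋃ n, A n) = Set.univ ∧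
      (∀ n, 0 < phiNorm φ (A n)) ∧
      Tendsto (fun n => phiNorm φ (⋃ k > n, A k)) atTop (𝓝 0) :=
  stmt9_general φ hφ hnotFσ
end

section
/- Let x be a real sequence whose set of statistical cluster points Γ_x is a discrete set. Then the set of statistical limit points of x equals Γ_x. -/
open Filter Topology Set
open scoped ENNReal

/-!
A statistical limit point is always a statistical cluster point. Conversely, let `ℓ` be an
isolated statistical cluster point and `K` a compact neighbourhood of `ℓ` containing no other
one. By compactness, for every neighbourhood `V` of `ℓ` the indices with `x n ∈ K \ V` have
density zero, so the indices with `x n` in the `k`-th set of a shrinking basis at `ℓ` have upper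
density bounded below by a fixed `ε > 0`, uniformly in `k`. Gluing their initial segments along a
fast increasing sequence of cut-off points gives an index set of upper density `≥ ε / 2` along
which `x` converges to `ℓ`.
-/

noncomputable def partialDensity (A : Set ℕ) (n : ℕ) : ℝ :=
  (Nat.card ↥(A ∩ Iio n) : ℝ) / n

theorem mem_I0_iff {A : Set ℕ} : A ∈ I0 ↔ Tendsto (partialDensity A) atTop (𝓝 0) := Iff.rfl

theorem partialDensity_nonneg (A : Set ℕ) (n : ℕ) : 0 ≤ partialDensity A n := by
  unfold partialDensity; positivity

theorem partialDensity_mono {A B : Set ℕ} (h : A ⊆ B) (n : ℕ) :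
    partialDensity A n ≤ partialDensity B n := by
  unfold partialDensity
  gcongr
  simp only [Nat.card_coe_set_eq]
  exact_mod_cast ncard_le_ncard (inter_subset_inter_left _ h) ((finite_Iio n).inter_of_right _)

theorem partialDensity_union_le (A B : Set ℕ) (n : ℕ) :
    partialDensity (A ∪ B) n ≤ partialDensity A n + partialDensity B n := by
  unfold partialDensity
  rw [← add_div, union_inter_distrib_right]
  gcongr
  simp only [Nat.card_coe_set_eq]
  exact_mod_cast ncard_union_le _ _

theorem partialDensity_inter_Iio_self (A : Set ℕ) (n : ℕ) :
    partialDensity (A ∩ Iio n) n = partialDensity A n := by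
  rw [partialDensity, partialDensity, inter_assoc, inter_self]

theorem mem_I0_of_subset {A B : Set ℕ} (h : A ⊆ B) (hB : B ∈ I0) : A ∈ I0 :=
  squeeze_zero (partialDensity_nonneg A) (partialDensity_mono h) hB

theorem union_mem_I0 {A B : Set ℕ} (hA : A ∈ I0) (hB : B ∈ I0) : A ∪ B ∈ I0 := by
  have hAB := (mem_I0_iff.1 hA).add (mem_I0_iff.1 hB)
  rw [add_zero] at hAB
  exact squeeze_zero (partialDensity_nonneg _) (partialDensity_union_le A B) hAB

theorem Set.Finite.mem_I0 {A : Set ℕ} (h : A.Finite) : A ∈ I0 := by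
  refine squeeze_zero (partialDensity_nonneg A) (fun n => ?_)
    (tendsto_const_div_atTop_nhds_zero_nat (A.ncard : ℝ))
  gcongr
  rw [Nat.card_coe_set_eq]
  exact_mod_cast ncard_le_ncard inter_subset_left h

theorem notMem_I0_iff {A : Set ℕ} :
    A ∉ I0 ↔ ∃ ε > 0, ∃ᶠ n in atTop, ε ≤ partialDensity A n := by
  have hlow : ∀ ε < (0 : ℝ), ∀ᶠ n in atTop, ε < partialDensity A n :=
    fun ε hε => Eventually.of_forall fun n => hε.trans_le (partialDensity_nonneg A n)
  rw [mem_I0_iff, tendsto_order, and_iff_right hlow]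
  simp only [not_forall, not_eventually, not_lt, exists_prop]

/-- A consequence of the P-ideal property of `I0`, proved directly by a diagonal argument. -/
theorem exists_notMem_I0_eventually_mem {S : Set ℕ} {D : ℕ → Set ℕ} (hD : Antitone D)
    (hS : S ∉ I0) (hSD : ∀ k, S \ D k ∈ I0) :
    ∃ A ∉ I0, ∀ k, ∀ᶠ n in atTop ⊓ 𝓟 A, n ∈ D k := by
  obtain ⟨ε, hε, hfreq⟩ := notMem_I0_iff.1 hS
  have hDfreq : ∀ k, ∃ᶠ n in atTop, ε / 2 ≤ partialDensity (D k) n := by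
    intro k
    have hsmall := (mem_I0_iff.1 (hSD k)).eventually_lt_const (half_pos hε)
    refine (hfreq.and_eventually hsmall).mono ?_
    rintro n ⟨hSn, hSDn⟩
    have := (partialDensity_mono (subset_sdiff_union S (D k)) n).trans
      (partialDensity_union_le _ _ n)
    linarith
  obtain ⟨m, hm, hdens⟩ := extraction_forall_of_frequently hDfreq
  refine ⟨⋃ k, D k ∩ Iio (m k), notMem_I0_iff.2 ⟨ε / 2, half_pos hε, ?_⟩, fun j => ?_⟩
  · refine frequently_atTop.2 fun N => ⟨m N, hm.id_le N, (hdens N).trans ?_⟩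
    rw [← partialDensity_inter_Iio_self]
    exact partialDensity_mono (subset_iUnion (fun k => D k ∩ Iio (m k)) N) _
  · rw [eventually_inf_principal]
    filter_upwards [eventually_ge_atTop (m j)] with n hjn hn
    obtain ⟨k, hnk, hnm⟩ := mem_iUnion.1 hn
    exact hD (hm.lt_iff_lt.1 (hjn.trans_lt hnm)).le hnk

section

variable {X : Type*} [TopologicalSpace X] {x : ℕ → X}

theorem ILimitPoint.iClusterPoint_I0 {ℓ : X} (h : ILimitPoint I0 x ℓ) :
    IClusterPoint I0 x ℓ := by
  rintro U hU hUI
  obtain ⟨A, hA, hx⟩ := h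
  obtain ⟨N, hN⟩ := mem_atTop_sets.1 (mem_inf_principal.1 (hx hU))
  refine hA (mem_I0_of_subset (fun n hn => ?_) (union_mem_I0 hUI (finite_Iio N).mem_I0))
  rcases lt_or_ge n N with hnN | hnN
  · exact Or.inr hnN
  · exact Or.inl (hN n hnN hn)

theorem IsCompact.preimage_mem_I0 {K : Set X} (hK : IsCompact K)
    (h : ∀ p ∈ K, ¬ IClusterPoint I0 x p) : x ⁻¹' K ∈ I0 := by
  refine hK.induction_on (p := fun s => x ⁻¹' s ∈ I0) (finite_empty.mem_I0)
    (fun s t hst ht => mem_I0_of_subset (preimage_mono hst) ht)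
    (fun s t hs ht => union_mem_I0 hs ht) fun p hp => ?_
  obtain ⟨U, hU, hUI⟩ : ∃ U ∈ 𝓝 p, {n | x n ∈ U} ∈ I0 := by
    simpa [IClusterPoint] using h p hp
  exact ⟨U, mem_nhdsWithin_of_mem_nhds hU, hUI⟩

theorem IClusterPoint.iLimitPoint_I0_of_isolated [LocallyCompactSpace X]
    [FirstCountableTopology X] {ℓ : X} {U : Set X} (hℓ : IClusterPoint I0 x ℓ)
    (hU : U ∈ 𝓝 ℓ) (hiso : U ∩ {p | IClusterPoint I0 x p} ⊆ {ℓ}) :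
    ILimitPoint I0 x ℓ := by
  obtain ⟨K, hKℓ, hKU, hK⟩ := local_compact_nhds hU
  obtain ⟨V, hV⟩ := (𝓝 ℓ).exists_antitone_basis
  have hKV : ∀ k, x ⁻¹' K \ x ⁻¹' V k ∈ I0 := by
    intro k
    refine mem_I0_of_subset (B := x ⁻¹' (K \ interior (V k))) ?_
      ((hK.diff isOpen_interior).preimage_mem_I0 ?_)
    · rintro n ⟨hnK, hnV⟩
      exact ⟨hnK, fun hn => hnV (interior_subset (s := V k) hn)⟩
    · rintro p ⟨hpK, hpV⟩ hp
      rw [hiso ⟨hKU hpK, hp⟩] at hpV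
      exact hpV (mem_interior_iff_mem_nhds.2 (hV.mem k))
  obtain ⟨A, hA, hAV⟩ := exists_notMem_I0_eventually_mem
    (fun i j hij => preimage_mono (hV.antitone hij)) (hℓ K hKℓ) hKV
  exact ⟨A, hA, hV.tendsto_right_iff.2 fun k _ => hAV k⟩

end

/-- if the set of statistical cluster points of a real sequence is
discrete, it equals the set of statistical limit points. -/
theorem stmt13 (x : ℕ → ℝ)
    (hdisc : ∀ ℓ ∈ {p : ℝ | IClusterPoint I0 x p},
      ∃ U ∈ 𝓝 ℓ, U ∩ {p : ℝ | IClusterPoint I0 x p} = {ℓ}) :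
    {ℓ : ℝ | ILimitPoint I0 x ℓ} = {ℓ : ℝ | IClusterPoint I0 x ℓ} := by
  ext ℓ
  refine ⟨ILimitPoint.iClusterPoint_I0, fun hℓ => ?_⟩
  obtain ⟨U, hU, hiso⟩ := hdisc ℓ hℓ
  exact hℓ.iLimitPoint_I0_of_isolated hU hiso.subset
end

section
/- An ideal I on ℕ is maximal if and only if every real sequence has at most one I-limit point. -/
open Filter Topology Set
open scoped ENNReal

/-- an ideal `I` is maximal iff every real sequence has at most
one `I`-limit point. -/
theorem stmt18 (I : Set (Set ℕ)) (hI : IsIdeal I) :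
    (∀ A : Set ℕ, A ∈ I ∨ Aᶜ ∈ I) ↔
      ∀ (x : ℕ → ℝ) (ℓ₁ ℓ₂ : ℝ), ILimitPoint I x ℓ₁ → ILimitPoint I x ℓ₂ → ℓ₁ = ℓ₂ := by
  obtain ⟨hfin, hsub, hun, huniv⟩ := hI
  constructor
  · rintro hmax x ℓ₁ ℓ₂ ⟨A₁, hA₁, h₁⟩ ⟨A₂, hA₂, h₂⟩
    have hc₁ : A₁ᶜ ∈ I := (hmax A₁).resolve_left hA₁
    have hc₂ : A₂ᶜ ∈ I := (hmax A₂).resolve_left hA₂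
    have hinter : (A₁ ∩ A₂) ∉ I := by
      intro h
      apply huniv
      have hsubset : (Set.univ : Set ℕ) ⊆ (A₁ ∩ A₂) ∪ (A₁ᶜ ∪ A₂ᶜ) := by
        intro n _
        by_cases h1 : n ∈ A₁ <;> by_cases h2 : n ∈ A₂ <;> simp [h1, h2]
      exact hsub _ _ hsubset (hun _ _ h (hun _ _ hc₁ hc₂))
    have hinf : (A₁ ∩ A₂).Infinite := fun hfin' => hinter (hfin _ hfin')
    have hne : (atTop ⊓ 𝓟 (A₁ ∩ A₂)).NeBot := by
      rw [Filter.inf_principal_neBot_iff]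
      intro U hU
      obtain ⟨n, hn⟩ := mem_atTop_sets.mp hU
      obtain ⟨m, hm, hmn⟩ := hinf.exists_gt n
      exact ⟨m, hn m hmn.le, hm⟩
    exact tendsto_nhds_unique
      (h₁.mono_left (inf_le_inf_left _ (principal_mono.2 Set.inter_subset_left)))
      (h₂.mono_left (inf_le_inf_left _ (principal_mono.2 Set.inter_subset_right)))
  · intro huniq A
    by_contra h
    classical
    push_neg at h
    obtain ⟨hA, hAc⟩ := h
    have h1 : ILimitPoint I (fun n => if n ∈ A then (0:ℝ) else 1) 0 := by
      refine ⟨A, hA, ?_⟩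
      refine Tendsto.congr' ?_ tendsto_const_nhds
      filter_upwards [mem_inf_of_right (mem_principal_self A)] with n hn
      simp [hn]
    have h2 : ILimitPoint I (fun n => if n ∈ A then (0:ℝ) else 1) 1 := by
      refine ⟨Aᶜ, hAc, ?_⟩
      refine Tendsto.congr' ?_ tendsto_const_nhds
      filter_upwards [mem_inf_of_right (mem_principal_self Aᶜ)] with n hn
      simp [if_neg hn]
    exact zero_ne_one (huniq _ _ _ h1 h2)
end

section
/- Let {P_m : m ∈ ℕ} be a partition of ℕ into infinite sets, and let I := {A ⊆ ℕ : {m : A ∩ P_m infinite} is finite} (the Fin × Fin ideal). For any real sequence x, the set of I-limit points of x equals ⋂_k ⋃_{m≥k} L_{x↾P_m}, where L_{x↾P_m} denotes the set of ordinary limit points of the subsequence (x_n : n ∈ P_m). In particular, the set of I-limit points is an F_{σδ}-set. -/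
open Filter Topology Set
open scoped ENNReal

/-!
If `A ∉ I` and `x → ℓ` along `A`, then `ℓ` is a limit point of `x` on each of the infinitely
many `P m` that meet `A` in an infinite set. Conversely, if for every `k` some `P m` with
`m ≥ k` has `ℓ` as a limit point, a diagonal choice from subsequences converging to `ℓ` on these
pieces yields a single `A ∉ I` along which `x → ℓ`. Each set of limit points of `x↾P m` is closed,
so the intersection is `F_{σδ}`.
-/

def finFinIdeal (P : ℕ → Set ℕ) : Set (Set ℕ) :=
  {A | {m | (A ∩ P m).Infinite}.Finite}

section

variable {X : Type*} [TopologicalSpace X] {x : ℕ → X} {ℓ : X}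

theorem Filter.Tendsto.mapClusterPt_of_infinite_inter {A S : Set ℕ}
    (hx : Tendsto x (atTop ⊓ 𝓟 A) (𝓝 ℓ)) (hAS : (A ∩ S).Infinite) :
    MapClusterPt ℓ (atTop ⊓ 𝓟 S) x := by
  have : (atTop ⊓ 𝓟 (A ∩ S)).NeBot := by
    rw [← Nat.cofinite_eq_atTop]
    exact hAS.cofinite_inf_principal_neBot
  exact (hx.mono_left (inf_le_inf_left _ (principal_mono.mpr inter_subset_left))).mapClusterPt.mono
    (inf_le_inf_left _ (principal_mono.mpr inter_subset_right))

/-- With `U` a decreasing neighbourhood basis at `ℓ` and `φ j` a subsequence of indices in `S j`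
with `x (φ j i) ∈ U i`, take `A := {φ j i | j ≤ i}`: outside `U k` it only has the finitely many
points with `i < k`. -/
theorem exists_forall_infinite_inter_tendsto [FirstCountableTopology X] {S : ℕ → Set ℕ}
    (h : ∀ j, MapClusterPt ℓ (atTop ⊓ 𝓟 (S j)) x) :
    ∃ A : Set ℕ, (∀ j, (A ∩ S j).Infinite) ∧ Tendsto x (atTop ⊓ 𝓟 A) (𝓝 ℓ) := by
  obtain ⟨U, hU⟩ := (𝓝 ℓ).exists_antitone_basis
  have hfreq (j i : ℕ) : ∃ᶠ n in atTop, n ∈ S j ∧ x n ∈ U i :=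
    frequently_inf_principal.mp (mapClusterPt_iff_frequently.mp (h j) _ (hU.mem i))
  choose φ hφ_mono hφ using fun j => extraction_forall_of_frequently (hfreq j)
  refine ⟨(fun p : ℕ × ℕ => φ p.1 p.2) '' {p | p.1 ≤ p.2}, fun j => ?_, ?_⟩
  · refine ((Ici_infinite j).image (hφ_mono j).injective.injOn).mono ?_
    rintro _ ⟨i, hi, rfl⟩
    exact ⟨⟨(j, i), hi, rfl⟩, (hφ j i).1⟩
  · refine hU.1.tendsto_right_iff.mpr fun k _ => eventually_inf_principal.mpr ?_
    have hfin : ((fun p : ℕ × ℕ => φ p.1 p.2) '' (Iio k ×ˢ Iio k)).Finite :=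
      ((finite_Iio k).prod (finite_Iio k)).image _
    rw [← Nat.cofinite_eq_atTop]
    filter_upwards [hfin.eventually_cofinite_notMem]
    rintro _ hnot ⟨⟨j, i⟩, hji : j ≤ i, rfl⟩
    have hki : k ≤ i := by
      by_contra! hik
      exact hnot ⟨(j, i), ⟨hji.trans_lt hik, hik⟩, rfl⟩
    exact hU.antitone hki (hφ j i).2

theorem iLimitPoint_finFinIdeal_iff [FirstCountableTopology X] {P : ℕ → Set ℕ} :
    ILimitPoint (finFinIdeal P) x ℓ ↔ ∀ k, ∃ m ≥ k, MapClusterPt ℓ (atTop ⊓ 𝓟 (P m)) x := by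
  constructor
  · rintro ⟨A, hA, hx⟩ k
    obtain ⟨m, hm, hkm⟩ := Infinite.exists_gt hA k
    exact ⟨m, hkm.le, hx.mapClusterPt_of_infinite_inter hm⟩
  · intro h
    choose m hm hcl using h
    obtain ⟨A, hA, hx⟩ := exists_forall_infinite_inter_tendsto hcl
    have hm_infinite : (range m).Infinite := infinite_of_not_bddAbove fun ⟨b, hb⟩ =>
      (hm (b + 1)).not_gt (Nat.lt_succ_of_le (hb ⟨b + 1, rfl⟩))
    exact ⟨A, fun hfin => hm_infinite (hfin.subset (range_subset_iff.mpr hA)), hx⟩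

end

theorem stmt19_general (P : ℕ → Set ℕ) (x : ℕ → ℝ) :
    ({ℓ : ℝ | ILimitPoint {A : Set ℕ | {m | (A ∩ P m).Infinite}.Finite} x ℓ}
        = ⋂ k : ℕ, ⋃ m : ℕ, ⋃ (_ : k ≤ m), {ℓ : ℝ | MapClusterPt ℓ (atTop ⊓ 𝓟 (P m)) x}) ∧
      ∃ G : ℕ → Set ℝ,
        (∀ k, ∃ F : ℕ → Set ℝ, (∀ n, IsClosed (F n)) ∧ G k = ⋃ n, F n) ∧
        {ℓ : ℝ | ILimitPoint {A : Set ℕ | {m | (A ∩ P m).Infinite}.Finite} x ℓ}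
          = ⋂ k, G k := by
  have hL : {ℓ : ℝ | ILimitPoint (finFinIdeal P) x ℓ}
      = ⋂ k : ℕ, ⋃ m : ℕ, ⋃ (_ : k ≤ m), {ℓ : ℝ | MapClusterPt ℓ (atTop ⊓ 𝓟 (P m)) x} := by
    ext ℓ
    simpa using iLimitPoint_finFinIdeal_iff
  exact ⟨hL, _, fun k =>
    ⟨_, fun _ => isClosed_setOfPred_clusterPt, iUnion_ge_eq_iUnion_nat_add _ k⟩, hL⟩

/-- for the `Fin × Fin` ideal built from a partition of ℕ into
infinite pieces, the `I`-limit points of a real sequence are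
`⋂_k ⋃_{m ≥ k} L_{x↾P m}`; in particular they form an `F_{σδ}`-set. -/
theorem stmt19 (P : ℕ → Set ℕ) (hdisj : Pairwise (Function.onFun Disjoint P))
    (hcover : (⋃ m, P m) = Set.univ) (hinf : ∀ m, (P m).Infinite) (x : ℕ → ℝ) :
    ({ℓ : ℝ | ILimitPoint {A : Set ℕ | {m | (A ∩ P m).Infinite}.Finite} x ℓ}
        = ⋂ k : ℕ, ⋃ m : ℕ, ⋃ (_ : k ≤ m), {ℓ : ℝ | MapClusterPt ℓ (atTop ⊓ 𝓟 (P m)) x}) ∧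
      ∃ G : ℕ → Set ℝ,
        (∀ k, ∃ F : ℕ → Set ℝ, (∀ n, IsClosed (F n)) ∧ G k = ⋃ n, F n) ∧
        {ℓ : ℝ | ILimitPoint {A : Set ℕ | {m | (A ∩ P m).Infinite}.Finite} x ℓ}
          = ⋂ k, G k :=
  stmt19_general P x
end
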